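/- Exact p-d'Alembertian of the power of the Minkowski Lorentz distance function: fix n ≥ 1, o ∈ ℝ^{n+1}, and conjugate nonzero exponents p, q < 1 (1/p + 1/q = 1). On I⁺(o) := {x : x 0 > o 0 and (x 0 − o 0)² > ∑_{i=1}^n (x i − o i)²}, let u(x) := √((x 0 − o 0)² − ∑_{i=1}^n (x i − o i)²) and u_q := u^q / q. Let G_q be the Minkowski gradient of u_q (time component ∂u_q/∂x 0, spatial components −∂u_q/∂x i), and define the p-gradient vector field X(x) := ((∂u_q/∂x 0)² − ∑_{i=1}^n (∂u_q/∂x i)²)^{(p−2)/2} · G_q(x). Then X(x) = x − o for every x ∈ I⁺(o), and the Euclidean divergence ∑_{j=0}^n ∂(X_j)/∂x_j equals n + 1 identically on I⁺(o). -/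

import Mathlib

noncomputable section

/-- The Minkowski bilinear form on `ℝ^{n+1}`. -/
def minkEta (n : ℕ) (v w : Fin (n + 1) → ℝ) : ℝ :=
  v 0 * w 0 - ∑ i : Fin n, v i.succ * w i.succ

/-- The open chronological future `I⁺(o)` of a point `o` in Minkowski space. -/
def chronoFuture (n : ℕ) (o : Fin (n + 1) → ℝ) : Set (Fin (n + 1) → ℝ) :=
  {x | o 0 < x 0 ∧ 0 < minkEta n (x - o) (x - o)}

/-- The Lorentz distance function from `o`. -/
def lorentzDist (n : ℕ) (o : Fin (n + 1) → ℝ) (x : Fin (n + 1) → ℝ) : ℝ :=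
  Real.sqrt (minkEta n (x - o) (x - o))

/-- The power `u_q = u^q / q` of the Lorentz distance function. -/
def lorentzDistPow (n : ℕ) (o : Fin (n + 1) → ℝ) (q : ℝ) (x : Fin (n + 1) → ℝ) : ℝ :=
  lorentzDist n o x ^ q / q

/-- The partial derivative `∂f/∂x_j` at `x`. -/
def partialDeriv (n : ℕ) (f : (Fin (n + 1) → ℝ) → ℝ) (x : Fin (n + 1) → ℝ)
    (j : Fin (n + 1)) : ℝ :=
  fderiv ℝ f x (Pi.single j 1)

/-- The Minkowski gradient of `f`: time component `∂f/∂x 0`, spatial components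
`−∂f/∂x i`. -/
def minkGrad (n : ℕ) (f : (Fin (n + 1) → ℝ) → ℝ) (x : Fin (n + 1) → ℝ) :
    Fin (n + 1) → ℝ :=
  fun j => if j = 0 then partialDeriv n f x j else -partialDeriv n f x j

/-- The Lorentzian conorm squared `|df|_*² = (∂f/∂x 0)² − ∑ᵢ (∂f/∂x i)²`. -/
def minkConormSq (n : ℕ) (f : (Fin (n + 1) → ℝ) → ℝ) (x : Fin (n + 1) → ℝ) : ℝ :=
  partialDeriv n f x 0 ^ 2 - ∑ i : Fin n, partialDeriv n f x i.succ ^ 2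

/-- The `p`-gradient vector field of `u_q`:
`X = (|d u_q|_*²)^{(p−2)/2} • (Minkowski gradient of u_q)`. -/
def pGradField (n : ℕ) (o : Fin (n + 1) → ℝ) (p q : ℝ) (x : Fin (n + 1) → ℝ) :
    Fin (n + 1) → ℝ :=
  minkConormSq n (lorentzDistPow n o q) x ^ ((p - 2) / 2) •
    minkGrad n (lorentzDistPow n o q) x

/-- The Euclidean divergence `∑_j ∂F_j/∂x_j` of a vector field `F` at `x`. -/
def eucDiv (n : ℕ) (F : (Fin (n + 1) → ℝ) → Fin (n + 1) → ℝ)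
    (x : Fin (n + 1) → ℝ) : ℝ :=
  ∑ j : Fin (n + 1), fderiv ℝ (fun y => F y j) x (Pi.single j 1)

open Topology

/-!
On `I⁺(o)` the function `s = η(x − o, x − o)` is positive and `u_q = s^{q/2}/q` near every
point, so `d u_q = s^{q/2-1} η(x − o, ·)`. Hence the Minkowski gradient of `u_q` is
`s^{q/2-1} (x − o)`, its conorm squared is `s^{q-1}`, and the `p`-gradient field is
`s^{(q-1)(p-2)/2 + q/2 - 1} (x − o)`. For conjugate exponents `p + q = p q`, which makes this
exponent vanish: the field is the translation `x ↦ x − o`, whose divergence is `n + 1`.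
-/

lemma minkEta_smul_left (n : ℕ) (c : ℝ) (v w : Fin (n + 1) → ℝ) :
    minkEta n (c • v) w = c * minkEta n v w := by
  simp only [minkEta, Pi.smul_apply, smul_eq_mul, mul_sub, Finset.mul_sum, mul_assoc]

lemma minkEta_smul_right (n : ℕ) (c : ℝ) (v w : Fin (n + 1) → ℝ) :
    minkEta n v (c • w) = c * minkEta n v w := by
  simp only [minkEta, Pi.smul_apply, smul_eq_mul, mul_sub, Finset.mul_sum, mul_left_comm]

lemma minkEta_single_right (n : ℕ) (v : Fin (n + 1) → ℝ) (j : Fin (n + 1)) :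
    minkEta n v (Pi.single j 1) = if j = 0 then v j else -v j := by
  induction j using Fin.cases with
  | zero => simp [minkEta, Fin.succ_ne_zero]
  | succ k => simp [minkEta, Pi.single_apply, Fin.succ_ne_zero, Finset.sum_ite_eq']

def minkEtaCLM (n : ℕ) (v : Fin (n + 1) → ℝ) : (Fin (n + 1) → ℝ) →L[ℝ] ℝ :=
  v 0 • ContinuousLinearMap.proj 0 - ∑ i : Fin n, v i.succ • ContinuousLinearMap.proj i.succ

@[simp]
lemma minkEtaCLM_apply (n : ℕ) (v w : Fin (n + 1) → ℝ) :
    minkEtaCLM n v w = minkEta n v w := by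
  simp [minkEtaCLM, minkEta]

lemma hasFDerivAt_minkEta_sub_self (n : ℕ) (o x : Fin (n + 1) → ℝ) :
    HasFDerivAt (fun y => minkEta n (y - o) (y - o)) ((2 : ℝ) • minkEtaCLM n (x - o)) x := by
  have hsq (j : Fin (n + 1)) : HasFDerivAt (fun y : Fin (n + 1) → ℝ => (y j - o j) * (y j - o j))
      ((2 * (x j - o j)) • ContinuousLinearMap.proj (R := ℝ) (φ := fun _ => ℝ) j) x := by
    have h : HasFDerivAt (fun y : Fin (n + 1) → ℝ => y j - o j)
        (ContinuousLinearMap.proj (R := ℝ) (φ := fun _ => ℝ) j) x :=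
      (hasFDerivAt_apply j x).sub_const (o j)
    refine (h.mul h).congr_fderiv (ContinuousLinearMap.ext fun w => ?_)
    simp only [add_apply, smul_apply, smul_eq_mul, ContinuousLinearMap.proj_apply]
    ring
  refine ((hsq 0).sub (HasFDerivAt.fun_sum fun i _ => hsq i.succ)).congr_fderiv
    (ContinuousLinearMap.ext fun w => ?_)
  simp only [sub_apply, smul_apply, smul_eq_mul, minkEtaCLM_apply, minkEta, Pi.sub_apply]
  rw [sum_apply]
  simp only [smul_apply, smul_eq_mul, ContinuousLinearMap.proj_apply, mul_sub, Finset.mul_sum]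
  ring_nf

lemma continuous_minkEta_sub_self (n : ℕ) (o : Fin (n + 1) → ℝ) :
    Continuous fun y => minkEta n (y - o) (y - o) :=
  continuous_iff_continuousAt.2 fun y => (hasFDerivAt_minkEta_sub_self n o y).continuousAt

lemma minkGrad_eq_of_hasFDerivAt {n : ℕ} {f : (Fin (n + 1) → ℝ) → ℝ} {x v : Fin (n + 1) → ℝ}
    (hf : HasFDerivAt f (minkEtaCLM n v) x) : minkGrad n f x = v := by
  funext j
  simp only [minkGrad, partialDeriv, hf.fderiv, minkEtaCLM_apply, minkEta_single_right]
  split_ifs <;> ring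

lemma minkConormSq_eq_minkEta_minkGrad (n : ℕ) (f : (Fin (n + 1) → ℝ) → ℝ)
    (x : Fin (n + 1) → ℝ) :
    minkConormSq n f x = minkEta n (minkGrad n f x) (minkGrad n f x) := by
  simp [minkConormSq, minkEta, minkGrad, Fin.succ_ne_zero, sq]

lemma lorentzDistPow_eventuallyEq (n : ℕ) (o : Fin (n + 1) → ℝ) (q : ℝ)
    {x : Fin (n + 1) → ℝ} (hx : 0 < minkEta n (x - o) (x - o)) :
    lorentzDistPow n o q =ᶠ[𝓝 x] fun y => q⁻¹ * minkEta n (y - o) (y - o) ^ (q / 2) := by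
  filter_upwards [(isOpen_lt continuous_const (continuous_minkEta_sub_self n o)).mem_nhds hx]
    with y hy
  rw [lorentzDistPow, lorentzDist, Real.sqrt_eq_rpow, ← Real.rpow_mul (le_of_lt hy),
    one_div_mul_eq_div, div_eq_inv_mul]

lemma hasFDerivAt_lorentzDistPow (n : ℕ) (o : Fin (n + 1) → ℝ) {q : ℝ} (hq : q ≠ 0)
    {x : Fin (n + 1) → ℝ} (hx : 0 < minkEta n (x - o) (x - o)) :
    HasFDerivAt (lorentzDistPow n o q)
      (minkEtaCLM n (minkEta n (x - o) (x - o) ^ (q / 2 - 1) • (x - o))) x := by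
  have h := ((hasFDerivAt_minkEta_sub_self n o x).rpow_const (p := q / 2)
    (Or.inl hx.ne')).const_mul q⁻¹
  refine (h.congr_of_eventuallyEq (lorentzDistPow_eventuallyEq n o q hx)).congr_fderiv
    (ContinuousLinearMap.ext fun w => ?_)
  simp only [FunLike.coe_smul, Pi.smul_apply, minkEtaCLM_apply, minkEta_smul_left,
    smul_eq_mul]
  field_simp

lemma add_eq_mul_of_one_div_add_one_div {p q : ℝ} (hp : p ≠ 0) (hq : q ≠ 0)
    (hpq : 1 / p + 1 / q = 1) : p + q = p * q := by
  field_simp at hpq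
  linarith

lemma pGradField_eq_sub (n : ℕ) (o : Fin (n + 1) → ℝ) {p q : ℝ} (hp : p ≠ 0) (hq : q ≠ 0)
    (hpq : 1 / p + 1 / q = 1) {x : Fin (n + 1) → ℝ} (hx : 0 < minkEta n (x - o) (x - o)) :
    pGradField n o p q x = x - o := by
  set s := minkEta n (x - o) (x - o)
  have hgrad := minkGrad_eq_of_hasFDerivAt (hasFDerivAt_lorentzDistPow n o hq hx)
  have hconorm : minkConormSq n (lorentzDistPow n o q) x = s ^ (q - 1) := by
    rw [minkConormSq_eq_minkEta_minkGrad, hgrad, minkEta_smul_left, minkEta_smul_right,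
      ← mul_assoc, ← Real.rpow_add hx, ← Real.rpow_add_one hx.ne']
    ring_nf
  have hexp : (q - 1) * ((p - 2) / 2) + (q / 2 - 1) = 0 := by
    linear_combination (-1 / 2 : ℝ) * add_eq_mul_of_one_div_add_one_div hp hq hpq
  rw [pGradField, hconorm, hgrad, smul_smul, ← Real.rpow_mul hx.le, ← Real.rpow_add hx, hexp,
    Real.rpow_zero, one_smul]

lemma eucDiv_eq_of_eventuallyEq_sub (n : ℕ) (o : Fin (n + 1) → ℝ)
    {F : (Fin (n + 1) → ℝ) → Fin (n + 1) → ℝ} {x : Fin (n + 1) → ℝ}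
    (hF : F =ᶠ[𝓝 x] fun y => y - o) :
    eucDiv n F x = n + 1 := by
  have hcomp (j : Fin (n + 1)) : fderiv ℝ (fun y => F y j) x (Pi.single j 1) = 1 := by
    have hFj : (fun y => F y j) =ᶠ[𝓝 x] fun y => y j - o j := hF.mono fun y hy => by simp [hy]
    rw [hFj.fderiv_eq, ((hasFDerivAt_apply j x).sub_const (o j)).fderiv]
    simp
  simp [eucDiv, hcomp]

lemma isOpen_chronoFuture (n : ℕ) (o : Fin (n + 1) → ℝ) : IsOpen (chronoFuture n o) :=
  (isOpen_lt continuous_const (continuous_apply 0)).inter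
    (isOpen_lt continuous_const (continuous_minkEta_sub_self n o))

theorem lorentzDistPow_p_dalembertian (n : ℕ) (o : Fin (n + 1) → ℝ)
    (p q : ℝ) (hp0 : p ≠ 0) (hq0 : q ≠ 0)
    (hpq : 1 / p + 1 / q = 1) :
    ∀ x ∈ chronoFuture n o,
      pGradField n o p q x = x - o ∧
      eucDiv n (pGradField n o p q) x = (n : ℝ) + 1 := by
  intro x hx
  refine ⟨pGradField_eq_sub n o hp0 hq0 hpq hx.2, eucDiv_eq_of_eventuallyEq_sub n o ?_⟩
  filter_upwards [(isOpen_chronoFuture n o).mem_nhds hx] with y hy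
  exact pGradField_eq_sub n o hp0 hq0 hpq hy.2
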